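/- Let λ be a nonempty Young diagram, let j ∈ B⁻(λ) and let i ∈ B⁺(λ) (so i ≠ j). Set D := d_{(λ ⊞ i) ⊟ j} if j ∈ B⁻(λ ⊞ i), and D := 0 otherwise. Then (1/(i−j)²) · (|λ|·d_{λ ⊞ i}·d_{λ ⊟ j}) / ((|λ|+1)·d_λ) = (|λ|·d_{λ ⊞ i}·d_{λ ⊟ j}) / ((|λ|+1)·d_λ) − D. -/

import Mathlib

/-- The content of a cell `(r, c)` (row `r`, column `c`) is `c - r`. -/
def content (x : ℕ × ℕ) : ℤ := (x.2 : ℤ) - (x.1 : ℤ)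

/-- `x` is an addable box of the Young diagram `μ`: `x ∉ μ` and `μ ∪ {x}` is again a
Young diagram. -/
def Addable (μ : YoungDiagram) (x : ℕ × ℕ) : Prop :=
  x ∉ μ ∧ IsLowerSet (↑(insert x μ.cells) : Set (ℕ × ℕ))

/-- `x` is a removable box of the Young diagram `μ`: `x ∈ μ` and `μ ∖ {x}` is again a
Young diagram. -/
def Removable (μ : YoungDiagram) (x : ℕ × ℕ) : Prop :=
  x ∈ μ ∧ IsLowerSet (↑(μ.cells.erase x) : Set (ℕ × ℕ))

/-- `B⁺(μ)`: the set of contents of addable boxes of `μ`. -/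
def Bplus (μ : YoungDiagram) : Set ℤ := {i | ∃ x, Addable μ x ∧ content x = i}

/-- `B⁻(μ)`: the set of contents of removable boxes of `μ`. -/
def Bminus (μ : YoungDiagram) : Set ℤ := {i | ∃ x, Removable μ x ∧ content x = i}

/-- `AddBox l i m` means `m = l ⊞ i`, i.e. `m` is obtained from `l` by adding an addable
box of content `i`. -/
def AddBox (l : YoungDiagram) (i : ℤ) (m : YoungDiagram) : Prop :=
  ∃ x, Addable l x ∧ content x = i ∧ m.cells = insert x l.cells

/-- `RemoveBox l i m` means `m = l ⊟ i`, i.e. `m` is obtained from `l` by removing a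
removable box of content `i`. -/
def RemoveBox (l : YoungDiagram) (i : ℤ) (m : YoungDiagram) : Prop :=
  ∃ x, Removable l x ∧ content x = i ∧ m.cells = l.cells.erase x

/-- The hook length `h_μ(r, c)` of a cell of `μ`. -/
def hookLen (μ : YoungDiagram) (x : ℕ × ℕ) : ℕ :=
  (μ.cells.filter (fun y => (y.1 = x.1 ∧ x.2 ≤ y.2) ∨ (y.2 = x.2 ∧ x.1 ≤ y.1))).card

/-- `d_μ = |μ|! / ∏ hook lengths`, the dimension of the irreducible `ℚS_{|μ|}`-module
indexed by `μ` (hook length formula). -/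
def dimPart (μ : YoungDiagram) : ℚ :=
  (Nat.factorial μ.card : ℚ) / ∏ x ∈ μ.cells, (hookLen μ x : ℚ)


/-!
Write `a` for the added box, `b` for the removed one and `H μ` for the product of the hook
lengths of `μ`, so that the ratio in the statement is `|λ|! · H λ / (H (λ ⊞ i) · H (λ ⊟ j))`.

If `b ≤ a`, the two boxes are adjacent, so `(i - j)² = 1`, and `λ ⊞ i` has no removable box of
content `j`, so `D = 0`. Otherwise `b` stays removable in `λ ⊞ i`, and `a ⊓ b` is the only cell
whose hook contains both `a` and `b`; its hook length in `λ` is `|i - j|`. On the cells of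
`λ ⊟ j`, the hook lengths in `λ`, `λ ⊞ i` and `(λ ⊞ i) ⊟ j` are those in `λ ⊟ j` plus the
indicators of `b`, of `a` and `b`, and of `a` lying in the hook. Hence the four hook products
satisfy `H (λ ⊞ i) · H (λ ⊟ j) · (i - j)² = H λ · H ((λ ⊞ i) ⊟ j) · ((i - j)² - 1)`, which is
the identity once denominators are cleared.
-/

/-- `y` lies in the hook of `x`. -/
def InHook (x y : ℕ × ℕ) : Prop := (y.1 = x.1 ∧ x.2 ≤ y.2) ∨ (y.2 = x.2 ∧ x.1 ≤ y.1)

instance (x y : ℕ × ℕ) : Decidable (InHook x y) := by unfold InHook; infer_instance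

theorem hookLen_eq_card_filter (μ : YoungDiagram) (x : ℕ × ℕ) :
    hookLen μ x = (μ.cells.filter (InHook x)).card := rfl

theorem InHook.le {x y : ℕ × ℕ} (h : InHook x y) : x ≤ y := by
  rcases h with ⟨h1, h2⟩ | ⟨h1, h2⟩
  · exact ⟨h1.ge, h2⟩
  · exact ⟨h2, h1.ge⟩

theorem InHook.refl (x : ℕ × ℕ) : InHook x x := Or.inl ⟨rfl, le_rfl⟩

theorem hookLen_pos {μ : YoungDiagram} {x : ℕ × ℕ} (hx : x ∈ μ) : 0 < hookLen μ x :=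
  Finset.card_pos.2 ⟨x, Finset.mem_filter.2 ⟨hx, InHook.refl x⟩⟩

theorem hookLen_of_cells_eq_insert {l m : YoungDiagram} {a : ℕ × ℕ} (ha : a ∉ l)
    (hm : m.cells = insert a l.cells) (x : ℕ × ℕ) :
    hookLen m x = hookLen l x + if InHook x a then 1 else 0 := by
  rw [hookLen_eq_card_filter, hookLen_eq_card_filter, hm, Finset.filter_insert]
  split_ifs with h
  · exact Finset.card_insert_of_notMem fun h' => ha (Finset.mem_of_mem_filter a h')
  · rfl

theorem mem_iff_of_cells_eq_insert {l m : YoungDiagram} {a y : ℕ × ℕ}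
    (hm : m.cells = insert a l.cells) : y ∈ m ↔ y = a ∨ y ∈ l := by
  rw [← YoungDiagram.mem_cells, hm, Finset.mem_insert, YoungDiagram.mem_cells]

theorem Removable.eq_of_le {μ : YoungDiagram} {b y : ℕ × ℕ} (hb : Removable μ b) (hy : y ∈ μ)
    (hby : b ≤ y) : y = b := by
  by_contra hne
  simpa using hb.2 hby (Finset.mem_coe.2 (Finset.mem_erase.2 ⟨hne, hy⟩))

theorem Removable.hookLen_eq_one {μ : YoungDiagram} {b : ℕ × ℕ} (hb : Removable μ b) :
    hookLen μ b = 1 := by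
  rw [hookLen_eq_card_filter, Finset.card_eq_one]
  refine ⟨b, Finset.eq_singleton_iff_unique_mem.2 ⟨Finset.mem_filter.2 ⟨hb.1, InHook.refl b⟩, ?_⟩⟩
  intro y hy
  obtain ⟨hyμ, hby⟩ := Finset.mem_filter.1 hy
  exact hb.eq_of_le hyμ hby.le

theorem removable_of_cells_eq_insert {l m : YoungDiagram} {a : ℕ × ℕ} (ha : a ∉ l)
    (hm : m.cells = insert a l.cells) : Removable m a := by
  refine ⟨(mem_iff_of_cells_eq_insert hm).2 (Or.inl rfl), ?_⟩
  rw [hm, Finset.erase_insert ha]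
  exact l.isLowerSet

theorem Addable.mem_of_lt {μ : YoungDiagram} {a x : ℕ × ℕ} (ha : Addable μ a) (hx : x < a) :
    x ∈ μ := by
  have := ha.2 hx.le (by simp : a ∈ (↑(insert a μ.cells) : Set (ℕ × ℕ)))
  simpa [hx.ne] using this

theorem Removable.of_cells_eq_insert {l m : YoungDiagram} {a b : ℕ × ℕ} (hb : Removable l b)
    (hm : m.cells = insert a l.cells) (hba : ¬ b ≤ a) : Removable m b := by
  have hmem {y} := mem_iff_of_cells_eq_insert (y := y) hm
  refine ⟨hmem.2 (Or.inr hb.1), fun y x hyx hx => ?_⟩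
  simp only [Finset.coe_erase, Set.mem_sdiff, Finset.mem_coe, Set.mem_singleton_iff] at hx ⊢
  refine ⟨m.isLowerSet hyx hx.1, ?_⟩
  rintro rfl
  rcases hmem.1 hx.1 with rfl | hxl
  · exact hba hyx
  · exact hx.2 (hb.eq_of_le hxl hyx)

theorem Addable.rowLen_eq {μ : YoungDiagram} {a : ℕ × ℕ} (ha : Addable μ a) :
    μ.rowLen a.1 = a.2 := by
  have hle : μ.rowLen a.1 ≤ a.2 := not_lt.1 fun h => ha.1 (YoungDiagram.mem_iff_lt_rowLen.2 h)
  rcases Nat.eq_zero_or_pos a.2 with h0 | hpos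
  · omega
  · have : (a.1, a.2 - 1) ∈ μ := ha.mem_of_lt (Prod.mk_lt_mk_iff_right.2 (by omega))
    have := YoungDiagram.mem_iff_lt_rowLen.1 this
    omega

theorem Addable.colLen_eq {μ : YoungDiagram} {a : ℕ × ℕ} (ha : Addable μ a) :
    μ.colLen a.2 = a.1 := by
  have hle : μ.colLen a.2 ≤ a.1 := not_lt.1 fun h => ha.1 (YoungDiagram.mem_iff_lt_colLen.2 h)
  rcases Nat.eq_zero_or_pos a.1 with h0 | hpos
  · omega
  · have : (a.1 - 1, a.2) ∈ μ := ha.mem_of_lt (Prod.mk_lt_mk_iff_left.2 (by omega))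
    have := YoungDiagram.mem_iff_lt_colLen.1 this
    omega

theorem Removable.rowLen_eq {μ : YoungDiagram} {b : ℕ × ℕ} (hb : Removable μ b) :
    μ.rowLen b.1 = b.2 + 1 := by
  have hlt : b.2 < μ.rowLen b.1 := YoungDiagram.mem_iff_lt_rowLen.1 hb.1
  have : (b.1, b.2 + 1) ∉ μ := fun h => by
    simpa [Prod.ext_iff] using hb.eq_of_le h ⟨le_rfl, Nat.le_succ _⟩
  have := mt YoungDiagram.mem_iff_lt_rowLen.2 this
  omega

theorem Removable.colLen_eq {μ : YoungDiagram} {b : ℕ × ℕ} (hb : Removable μ b) :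
    μ.colLen b.2 = b.1 + 1 := by
  have hlt : b.1 < μ.colLen b.2 := YoungDiagram.mem_iff_lt_colLen.1 hb.1
  have : (b.1 + 1, b.2) ∉ μ := fun h => by
    simpa [Prod.ext_iff] using hb.eq_of_le h ⟨Nat.le_succ _, le_rfl⟩
  have := mt YoungDiagram.mem_iff_lt_colLen.2 this
  omega

theorem hookLen_add_one {μ : YoungDiagram} {x : ℕ × ℕ} (hx : x ∈ μ) :
    hookLen μ x + 1 = (μ.rowLen x.1 - x.2) + (μ.colLen x.2 - x.1) := by
  have harm : μ.cells.filter (fun y => y.1 = x.1 ∧ x.2 ≤ y.2) =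
      {x.1} ×ˢ Finset.Ico x.2 (μ.rowLen x.1) := by
    ext ⟨r, c⟩
    simp only [Finset.mem_filter, YoungDiagram.mem_cells, Finset.mem_product,
      Finset.mem_singleton, Finset.mem_Ico]
    constructor
    · rintro ⟨h, rfl, hc⟩
      exact ⟨rfl, hc, YoungDiagram.mem_iff_lt_rowLen.1 h⟩
    · rintro ⟨rfl, hc, h⟩
      exact ⟨YoungDiagram.mem_iff_lt_rowLen.2 h, rfl, hc⟩
  have hleg : μ.cells.filter (fun y => y.2 = x.2 ∧ x.1 ≤ y.1) =
      Finset.Ico x.1 (μ.colLen x.2) ×ˢ {x.2} := by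
    ext ⟨r, c⟩
    simp only [Finset.mem_filter, YoungDiagram.mem_cells, Finset.mem_product,
      Finset.mem_singleton, Finset.mem_Ico]
    constructor
    · rintro ⟨h, rfl, hr⟩
      exact ⟨⟨hr, YoungDiagram.mem_iff_lt_colLen.1 h⟩, rfl⟩
    · rintro ⟨⟨hr, h⟩, rfl⟩
      exact ⟨YoungDiagram.mem_iff_lt_colLen.2 h, rfl, hr⟩
  have hcorner : μ.cells.filter (fun y => y.1 = x.1 ∧ x.2 ≤ y.2) ∩
      μ.cells.filter (fun y => y.2 = x.2 ∧ x.1 ≤ y.1) = {x} := by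
    ext y
    simp only [Finset.mem_inter, Finset.mem_filter, Finset.mem_singleton, YoungDiagram.mem_cells]
    constructor
    · rintro ⟨⟨-, h1, -⟩, -, h2, -⟩
      exact Prod.ext h1 h2
    · rintro rfl
      exact ⟨⟨hx, rfl, le_rfl⟩, hx, rfl, le_rfl⟩
  have := Finset.card_union_add_card_inter (μ.cells.filter (fun y => y.1 = x.1 ∧ x.2 ≤ y.2))
    (μ.cells.filter (fun y => y.2 = x.2 ∧ x.1 ≤ y.1))
  rw [← Finset.filter_or, hcorner, harm, hleg] at this
  simpa [hookLen] using this

theorem le_total_of_content_eq {x y : ℕ × ℕ} (h : content x = content y) : x ≤ y ∨ y ≤ x := by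
  simp only [content, Prod.le_def] at h ⊢
  omega

theorem sq_content_sub_eq_one {μ : YoungDiagram} {a b : ℕ × ℕ} (ha : Addable μ a)
    (hb : Removable μ b) (hba : b ≤ a) : (content a - content b) ^ 2 = 1 := by
  have hne : b ≠ a := fun h => ha.1 (h ▸ hb.1)
  have hnext : ∀ y, b ≤ y → y ≤ a → y ≠ b → y = a := fun y hby hya hyb =>
    by_contra fun hya' => hyb (hb.eq_of_le (ha.mem_of_lt (lt_of_le_of_ne hya hya')) hby)
  obtain ⟨h1, h2⟩ := hba
  rcases Nat.lt_or_ge b.2 a.2 with h | h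
  · have := hnext (b.1, b.2 + 1) ⟨le_rfl, Nat.le_succ _⟩ ⟨h1, h⟩
      (by simp [Prod.ext_iff])
    simp [← this, content]
  · have h1' : b.1 < a.1 := lt_of_le_of_ne h1 fun h' => hne (Prod.ext h' (by omega))
    have := hnext (b.1 + 1, b.2) ⟨Nat.le_succ _, le_rfl⟩ ⟨h1', h2⟩ (by simp [Prod.ext_iff])
    simp [← this, content]

theorem content_notMem_Bminus_of_le {l m : YoungDiagram} {a b : ℕ × ℕ} (ha : Addable l a)
    (hb : Removable l b) (hm : m.cells = insert a l.cells) (hba : b ≤ a) :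
    content b ∉ Bminus m := by
  have hmem {y} := mem_iff_of_cells_eq_insert (y := y) hm
  rintro ⟨x, hx, hcx⟩
  have hxa : x ≠ a := by
    rintro rfl
    simpa [hcx] using sq_content_sub_eq_one ha hb hba
  have hxb : x = b := by
    rcases le_total_of_content_eq hcx with h | h
    · exact (hx.eq_of_le (hmem.2 (Or.inr hb.1)) h).symm
    · exact hb.eq_of_le ((hmem.1 hx.1).resolve_left hxa) h
  subst hxb
  exact hxa (hx.eq_of_le (hmem.2 (Or.inl rfl)) hba).symm

theorem inHook_inf_left {x y : ℕ × ℕ} (hyx : ¬ y ≤ x) : InHook (x ⊓ y) x := by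
  simp only [InHook, Prod.fst_inf, Prod.snd_inf, Prod.le_def] at *
  omega

theorem inHook_inf_right {x y : ℕ × ℕ} (hxy : ¬ x ≤ y) : InHook (x ⊓ y) y := by
  simp only [InHook, Prod.fst_inf, Prod.snd_inf, Prod.le_def] at *
  omega

theorem eq_inf_of_inHook {x y z : ℕ × ℕ} (hxy : ¬ x ≤ y) (hyx : ¬ y ≤ x) (hzx : InHook z x)
    (hzy : InHook z y) : z = x ⊓ y := by
  simp only [InHook, Prod.ext_iff, Prod.fst_inf, Prod.snd_inf, Prod.le_def] at *
  omega

theorem hookLen_inf {μ : YoungDiagram} {a b : ℕ × ℕ} (ha : Addable μ a) (hb : Removable μ b)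
    (hba : ¬ b ≤ a) : (hookLen μ (a ⊓ b) : ℤ) = |content a - content b| := by
  have hab : ¬ a ≤ b := fun h => ha.1 (μ.isLowerSet h hb.1)
  have hz := hookLen_add_one (μ.isLowerSet (inf_le_right : a ⊓ b ≤ b) hb.1)
  simp only [Prod.le_def, not_and_or, not_le] at hab hba
  rcases Nat.lt_or_ge a.1 b.1 with h | h
  · have hz' : a ⊓ b = (a.1, b.2) := Prod.ext (min_eq_left h.le) (min_eq_right (by omega))
    rw [hz', ha.rowLen_eq, hb.colLen_eq] at hz
    rw [hz', abs_of_pos (by simp only [content]; omega)]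
    simp only [content]
    omega
  · have hz' : a ⊓ b = (b.1, a.2) := Prod.ext (min_eq_right h) (min_eq_left (by omega))
    rw [hz', hb.rowLen_eq, ha.colLen_eq] at hz
    rw [hz', abs_of_neg (by simp only [content]; omega)]
    simp only [content]
    omega

theorem Finset.prod_mul_eq_prod_mul_of_eqOn_erase {ι M : Type*} [CommMonoid M] [DecidableEq ι]
    {s : Finset ι} {z : ι} (hz : z ∈ s) {f g : ι → M} (h : ∀ x ∈ s, x ≠ z → f x = g x) :
    (∏ x ∈ s, f x) * g z = (∏ x ∈ s, g x) * f z := by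
  rw [← Finset.mul_prod_erase s f hz, ← Finset.mul_prod_erase s g hz,
    Finset.prod_congr rfl fun x hx => h x (Finset.mem_of_mem_erase hx) (Finset.ne_of_mem_erase hx)]
  ac_rfl

def hookProd (μ : YoungDiagram) : ℚ := ∏ x ∈ μ.cells, (hookLen μ x : ℚ)

theorem dimPart_eq (μ : YoungDiagram) : dimPart μ = μ.card.factorial / hookProd μ := rfl

theorem hookProd_ne_zero (μ : YoungDiagram) : hookProd μ ≠ 0 :=
  Finset.prod_ne_zero_iff.2 fun _ hx => Nat.cast_ne_zero.2 (hookLen_pos hx).ne'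

theorem hookProd_of_cells_eq_insert {l m : YoungDiagram} {a : ℕ × ℕ} (ha : a ∉ l)
    (hm : m.cells = insert a l.cells) : hookProd m = ∏ x ∈ l.cells, (hookLen m x : ℚ) := by
  rw [hookProd, hm, Finset.prod_insert ha, (removable_of_cells_eq_insert ha hm).hookLen_eq_one,
    Nat.cast_one, one_mul]

theorem hookProd_mul_hookProd_mul_sq {l mi mj m' : YoungDiagram} {a b : ℕ × ℕ}
    (ha : Addable l a) (hb : Removable l b) (hba : ¬ b ≤ a)
    (hmi : mi.cells = insert a l.cells) (hmj : mj.cells = l.cells.erase b)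
    (hm' : m'.cells = mi.cells.erase b) :
    hookProd mi * hookProd mj * (hookLen l (a ⊓ b) : ℚ) ^ 2 =
      hookProd l * hookProd m' * ((hookLen l (a ⊓ b) : ℚ) ^ 2 - 1) := by
  have hab : ¬ a ≤ b := fun h => ha.1 (l.isLowerSet h hb.1)
  have hne : a ≠ b := fun h => hab h.le
  have hl : l.cells = insert b mj.cells := by rw [hmj, Finset.insert_erase hb.1]
  have hbj : b ∉ mj := by simp [← YoungDiagram.mem_cells, hmj]
  have haj : a ∉ mj := by
    rw [← YoungDiagram.mem_cells, hmj]; exact fun h => ha.1 (Finset.mem_of_mem_erase h)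
  have hm'j : m'.cells = insert a mj.cells := by rw [hm', hmi, hmj, Finset.erase_insert_of_ne hne]
  have hook_l := hookLen_of_cells_eq_insert hbj hl
  have hook_mi := hookLen_of_cells_eq_insert ha.1 hmi
  have hook_m' := hookLen_of_cells_eq_insert haj hm'j
  have hProd_mi : hookProd mi = ∏ x ∈ mj.cells, (hookLen mi x : ℚ) := by
    rw [hookProd_of_cells_eq_insert ha.1 hmi, hl, Finset.prod_insert hbj,
      (hb.of_cells_eq_insert hmi hba).hookLen_eq_one, Nat.cast_one, one_mul]
  have hz : a ⊓ b ∈ mj.cells := by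
    rw [hmj, Finset.mem_erase]
    exact ⟨fun h => hba (h ▸ inf_le_left), l.isLowerSet inf_le_right hb.1⟩
  rw [hookProd_of_cells_eq_insert hbj hl, hProd_mi, hookProd_of_cells_eq_insert haj hm'j,
    hookProd, ← Finset.prod_mul_distrib, ← Finset.prod_mul_distrib]
  convert Finset.prod_mul_eq_prod_mul_of_eqOn_erase hz fun x _ hxz => ?_ using 2
  · rw [hook_l, if_pos (inHook_inf_right hab), hook_m', if_pos (inHook_inf_left hba)]
    push_cast; ring
  · rw [hook_mi, hook_l, if_pos (inHook_inf_right hab), if_pos (inHook_inf_left hba)]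
    push_cast; ring
  · have : ¬ InHook x a ∨ ¬ InHook x b :=
      not_and_or.1 fun h => hxz (eq_inf_of_inHook hab hba h.1 h.2)
    rw [hook_mi, hook_l, hook_m']
    rcases this with h | h <;> simp only [h, ↓reduceIte] <;> push_cast <;> ring

theorem card_mul_dimPart_mul_dimPart_div {l mi mj : YoungDiagram} (hmi : mi.card = l.card + 1)
    (hmj : mj.card + 1 = l.card) :
    (l.card : ℚ) * dimPart mi * dimPart mj / (((l.card : ℚ) + 1) * dimPart l) =
      l.card.factorial * hookProd l / (hookProd mi * hookProd mj) := by
  have := hookProd_ne_zero l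
  have := hookProd_ne_zero mi
  have := hookProd_ne_zero mj
  rw [dimPart_eq, dimPart_eq, dimPart_eq, hmi, ← hmj]
  push_cast [Nat.factorial_succ]
  field_simp

theorem hook_identity_mixed_general (l : YoungDiagram) (i j : ℤ)
    (mi mj : YoungDiagram) (hmi : AddBox l i mi) (hmj : RemoveBox l j mj)
    (Dv : ℚ)
    (hD1 : ∀ m : YoungDiagram, RemoveBox mi j m → Dv = dimPart m)
    (hD2 : j ∉ Bminus mi → Dv = 0) :
    (1 / ((i : ℚ) - (j : ℚ)) ^ 2) *
        ((l.card : ℚ) * dimPart mi * dimPart mj) / (((l.card : ℚ) + 1) * dimPart l) =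
      ((l.card : ℚ) * dimPart mi * dimPart mj) / (((l.card : ℚ) + 1) * dimPart l) -
        Dv := by
  obtain ⟨a, ha, rfl, hmi⟩ := hmi
  obtain ⟨b, hb, rfl, hmj⟩ := hmj
  have hcard_mi : mi.card = l.card + 1 := by
    rw [YoungDiagram.card, hmi, Finset.card_insert_of_notMem ha.1]
  have hcard_mj : mj.card + 1 = l.card := by
    rw [YoungDiagram.card, hmj, Finset.card_erase_add_one hb.1]
  rw [mul_div_assoc, card_mul_dimPart_mul_dimPart_div hcard_mi hcard_mj]
  by_cases hba : b ≤ a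
  · have hsq : ((content a : ℚ) - content b) ^ 2 = 1 := by
      exact_mod_cast sq_content_sub_eq_one ha hb hba
    rw [hD2 (content_notMem_Bminus_of_le ha hb hmi hba), hsq]
    ring
  · have hb' := hb.of_cells_eq_insert hmi hba
    let m' : YoungDiagram := ⟨mi.cells.erase b, hb'.2⟩
    have hcard_m' : m'.card = l.card := by
      rw [YoungDiagram.card, Finset.card_erase_of_mem hb'.1]
      exact Nat.sub_eq_of_eq_add hcard_mi
    have hsq : ((content a : ℚ) - content b) ^ 2 = (hookLen l (a ⊓ b) : ℚ) ^ 2 := by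
      rw [← sq_abs]
      exact_mod_cast congrArg (fun t : ℤ => t ^ (2 : ℕ)) (hookLen_inf ha hb hba).symm
    have hK : (hookLen l (a ⊓ b) : ℚ) ≠ 0 :=
      Nat.cast_ne_zero.2 (hookLen_pos (l.isLowerSet inf_le_right hb.1)).ne'
    have := hookProd_ne_zero mi
    have := hookProd_ne_zero mj
    have := hookProd_ne_zero m'
    rw [hD1 m' ⟨b, hb', rfl, rfl⟩, dimPart_eq, hcard_m', hsq]
    field_simp
    linear_combination hookProd_mul_hookProd_mul_sq (m' := m') ha hb hba hmi hmj rfl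

/-- For a nonempty Young diagram `λ`, `j ∈ B⁻(λ)` and `i ∈ B⁺(λ)`, with
`D = d_{(λ⊞i)⊟j}` if `j ∈ B⁻(λ⊞i)` and `D = 0` otherwise:
`(1/(i−j)²)·(|λ|·d_{λ⊞i}·d_{λ⊟j})/((|λ|+1)·d_λ)
    = (|λ|·d_{λ⊞i}·d_{λ⊟j})/((|λ|+1)·d_λ) − D`. -/
theorem hook_identity_mixed (l : YoungDiagram) (hl : 0 < l.card) (i j : ℤ)
    (hi : i ∈ Bplus l) (hj : j ∈ Bminus l)
    (mi mj : YoungDiagram) (hmi : AddBox l i mi) (hmj : RemoveBox l j mj)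
    (Dv : ℚ)
    (hD1 : ∀ m : YoungDiagram, RemoveBox mi j m → Dv = dimPart m)
    (hD2 : j ∉ Bminus mi → Dv = 0) :
    (1 / ((i : ℚ) - (j : ℚ)) ^ 2) *
        ((l.card : ℚ) * dimPart mi * dimPart mj) / (((l.card : ℚ) + 1) * dimPart l) =
      ((l.card : ℚ) * dimPart mi * dimPart mj) / (((l.card : ℚ) + 1) * dimPart l) -
        Dv :=
  hook_identity_mixed_general l i j mi mj hmi hmj Dv hD1 hD2
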